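/- There exists a universal constant C such that for every s ∈ (1/2,1) the following holds. Let γ ⊂ S² be a compact set and Λ > 0 be such that H¹(γ ∩ B_ρ(p)) ≤ Λ ρ for every p ∈ γ and every ρ ∈ (0,1/2). Then for every p ∈ γ, every X̂ ∈ S¹ and every τ > 1, ∫_{γ} |p − τŷ|^{−3−s} dH¹(ŷ) ≤ C Λ ∫_{S¹} |X̂ − τŶ|^{−3−s} dH¹(Ŷ). -/

import Mathlib

/-! On the unit sphere `‖p - τ • y‖² = (τ - 1)² + τ ‖p - y‖²`, so both kernels are the same
decreasing function of the distance to the centre, and by the layer-cake formula it suffices to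
compare `H¹(γ ∩ B̄_r(p))` with `H¹(S¹ ∩ B̄_r(X))` for every `r`. For `r < 1/4` the density bound
gives at most `2Λr`, while an arc of `S¹` projects onto a segment of length `≥ r/2`. For larger
`r` one uses the total mass of `γ`, which is `O(Λ)` because `S²` is covered by finitely many balls
of radius `1/8`. -/

open MeasureTheory
open scoped ENNReal

noncomputable section

abbrev E3 := EuclideanSpace ℝ (Fin 3)
abbrev E2 := EuclideanSpace ℝ (Fin 2)

open Metric Set
open scoped RealInnerProductSpace

theorem lintegral_ofReal_le_mul_of_meas_le {α β : Type*} [MeasurableSpace α]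
    [MeasurableSpace β] {μ : Measure α} {ν : Measure β} {f : α → ℝ} {g : β → ℝ}
    (hf : 0 ≤ᵐ[μ] f) (hfm : AEMeasurable f μ) (hg : 0 ≤ᵐ[ν] g) (hgm : AEMeasurable g ν)
    {c : ℝ≥0∞} (hc : c ≠ ∞) (h : ∀ t > 0, μ {a | t ≤ f a} ≤ c * ν {b | t ≤ g b}) :
    ∫⁻ a, ENNReal.ofReal (f a) ∂μ ≤ c * ∫⁻ b, ENNReal.ofReal (g b) ∂ν := by
  rw [lintegral_eq_lintegral_meas_le μ hf hfm, lintegral_eq_lintegral_meas_le ν hg hgm,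
    ← lintegral_const_mul' c _ hc]
  exact setLIntegral_mono' measurableSet_Ioi h

theorem measure_le_card_mul_of_subset_biUnion_ball {α : Type*} [PseudoMetricSpace α]
    [MeasurableSpace α] (μ : Measure α) {γ : Set α} {t : Finset α} {δ : ℝ}
    (hcover : γ ⊆ ⋃ x ∈ t, ball x δ) {M : ℝ≥0∞} (hM : ∀ q ∈ γ, μ (γ ∩ ball q (2 * δ)) ≤ M) :
    μ γ ≤ t.card * M := by
  have hpiece : ∀ x, μ (γ ∩ ball x δ) ≤ M := by
    intro x
    rcases (γ ∩ ball x δ).eq_empty_or_nonempty with hempty | ⟨q, hqγ, hqx⟩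
    · simp [hempty]
    · refine (measure_mono (inter_subset_inter_right _ (ball_subset_ball' ?_))).trans (hM q hqγ)
      rw [mem_ball, dist_comm] at hqx
      linarith
  calc μ γ ≤ μ (⋃ x ∈ t, γ ∩ ball x δ) := measure_mono fun y hy => by
        simpa [mem_iUnion₂, hy] using hcover hy
    _ ≤ ∑ x ∈ t, μ (γ ∩ ball x δ) := measure_biUnion_finset_le _ _
    _ ≤ ∑ _x ∈ t, M := Finset.sum_le_sum fun x _ => hpiece x
    _ = t.card * M := by rw [Finset.sum_const, nsmul_eq_mul]

theorem measure_inter_closedBall_le_of_upper_density {α β : Type*} [MetricSpace α]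
    [MeasurableSpace α] [PseudoMetricSpace β] [MeasurableSpace β] {μ : Measure α}
    [NullSingletonClass μ] {ν : Measure β} {γ : Set α} {T : Set β} {p : α} {x : β}
    {Λ K C : ℝ} (hΛ : 0 ≤ Λ) (hC : 4 ≤ C) (hK : 8 * K ≤ C)
    (hden : ∀ ρ ∈ Ioo (0 : ℝ) (1 / 2), μ (γ ∩ ball p ρ) ≤ ENNReal.ofReal (Λ * ρ))
    (hmass : μ γ ≤ ENNReal.ofReal (K * Λ))
    (hlow : ∀ r ∈ Ioc (0 : ℝ) 1, ENNReal.ofReal (r / 2) ≤ ν (T ∩ closedBall x r)) (r : ℝ) :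
    μ (γ ∩ closedBall p r) ≤ ENNReal.ofReal (C * Λ) * ν (T ∩ closedBall x r) := by
  rcases le_or_gt r 0 with hr | hr
  · have hsub : γ ∩ closedBall p r ⊆ {p} := by
      rw [← closedBall_zero]
      exact inter_subset_right.trans (closedBall_subset_closedBall hr)
    simp [measure_mono_null hsub (measure_singleton p)]
  set ρ := min r (1 / 4) with hρ
  have hρ0 : 0 < ρ := lt_min hr (by norm_num)
  have hleft : μ (γ ∩ closedBall p r) ≤ ENNReal.ofReal (C * Λ * (ρ / 2)) := by
    rcases lt_or_ge r (1 / 4) with hr4 | hr4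
    · rw [hρ, min_eq_left hr4.le]
      calc μ (γ ∩ closedBall p r) ≤ μ (γ ∩ ball p (2 * r)) :=
            measure_mono (inter_subset_inter_right _ (closedBall_subset_ball (by linarith)))
        _ ≤ ENNReal.ofReal (Λ * (2 * r)) := hden _ ⟨by linarith, by linarith⟩
        _ ≤ ENNReal.ofReal (C * Λ * (r / 2)) := ENNReal.ofReal_le_ofReal
            (by nlinarith [mul_nonneg (mul_nonneg (sub_nonneg.2 hC) hΛ) hr.le])
    · rw [hρ, min_eq_right hr4]
      calc μ (γ ∩ closedBall p r) ≤ μ γ := measure_mono inter_subset_left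
        _ ≤ ENNReal.ofReal (K * Λ) := hmass
        _ ≤ ENNReal.ofReal (C * Λ * (1 / 4 / 2)) := ENNReal.ofReal_le_ofReal (by nlinarith)
  calc μ (γ ∩ closedBall p r) ≤ ENNReal.ofReal (C * Λ) * ENNReal.ofReal (ρ / 2) := by
        rwa [← ENNReal.ofReal_mul (by nlinarith)]
    _ ≤ ENNReal.ofReal (C * Λ) * ν (T ∩ closedBall x ρ) := by
        gcongr
        exact hlow ρ ⟨hρ0, (min_le_right _ _).trans (by norm_num)⟩
    _ ≤ ENNReal.ofReal (C * Λ) * ν (T ∩ closedBall x r) := by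
        gcongr
        exact min_le_left _ _

section UnitSphere

variable {E : Type*} [NormedAddCommGroup E] [InnerProductSpace ℝ E]

theorem norm_sub_smul_sq_of_norm_eq_one {p y : E} (hp : ‖p‖ = 1) (hy : ‖y‖ = 1) (τ : ℝ) :
    ‖p - τ • y‖ ^ 2 = (τ - 1) ^ 2 + τ * ‖p - y‖ ^ 2 := by
  rw [norm_sub_sq_real, norm_sub_sq_real, real_inner_smul_right, norm_smul, hp, hy,
    Real.norm_eq_abs, mul_one, sq_abs]
  ring

theorem le_norm_sub_smul_rpow_iff {p y : E} (hp : ‖p‖ = 1) (hy : ‖y‖ = 1) {τ e t : ℝ}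
    (hτ : 1 < τ) (he : e < 0) (ht : 0 < t) :
    t ≤ ‖p - τ • y‖ ^ e ↔ ‖p - y‖ ^ 2 ≤ (t ^ (2 / e) - (τ - 1) ^ 2) / τ := by
  have hsq := norm_sub_smul_sq_of_norm_eq_one hp hy τ
  have hpos : 0 < ‖p - τ • y‖ ^ 2 := by rw [hsq]; nlinarith [sq_nonneg ‖p - y‖]
  have hpow : ‖p - τ • y‖ ^ e = (‖p - τ • y‖ ^ 2) ^ (2 / e)⁻¹ := by
    rw [← Real.rpow_natCast, ← Real.rpow_mul (norm_nonneg _)]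
    congr 1
    field_simp
    norm_num
  rw [hpow, Real.le_rpow_inv_iff_of_neg ht hpos (div_neg_of_pos_of_neg two_pos he), hsq,
    le_div_iff₀ (by linarith)]
  constructor <;> intro h <;> linarith

theorem le_norm_sub_smul_rpow_iff_mem_closedBall {p y : E} (hp : ‖p‖ = 1) (hy : y ∈ sphere 0 1)
    {τ e t : ℝ} (hτ : 1 < τ) (he : e < 0) (ht : 0 < t)
    (hw : 0 ≤ (t ^ (2 / e) - (τ - 1) ^ 2) / τ) :
    t ≤ ‖p - τ • y‖ ^ e ↔ y ∈ closedBall p √((t ^ (2 / e) - (τ - 1) ^ 2) / τ) := by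
  rw [le_norm_sub_smul_rpow_iff hp (mem_sphere_zero_iff_norm.1 hy) hτ he ht, mem_closedBall,
    dist_comm, dist_eq_norm, Real.le_sqrt (norm_nonneg _) hw]

theorem norm_smul_add_smul_sq {X v : E} (hX : ‖X‖ = 1) (hv : ‖v‖ = 1) (hXv : ⟪X, v⟫ = 0)
    (a b : ℝ) : ‖a • X + b • v‖ ^ 2 = a ^ 2 + b ^ 2 := by
  rw [norm_add_sq_real, real_inner_smul_left, real_inner_smul_right, hXv, norm_smul, norm_smul,
    hX, hv, Real.norm_eq_abs, Real.norm_eq_abs, mul_one, mul_one, sq_abs, sq_abs]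
  ring

variable [MeasurableSpace E] [BorelSpace E]

theorem ofReal_half_le_hausdorffMeasure_sphere_inter_closedBall {X v : E} (hX : ‖X‖ = 1)
    (hv : ‖v‖ = 1) (hXv : ⟪X, v⟫ = 0) {r : ℝ} (hr0 : 0 < r) (hr1 : r ≤ 1) :
    ENNReal.ofReal (r / 2) ≤ μH[1] (sphere (0 : E) 1 ∩ closedBall X r) := by
  set arc : ℝ → E := fun θ => Real.cos θ • X + Real.sin θ • v
  have harc : arc '' Icc 0 r ⊆ sphere 0 1 ∩ closedBall X r := by
    rintro _ ⟨θ, ⟨hθ0, hθr⟩, rfl⟩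
    refine ⟨?_, ?_⟩
    · rw [mem_sphere_zero_iff_norm, ← pow_eq_one_iff_of_nonneg (norm_nonneg _) two_ne_zero,
        norm_smul_add_smul_sq hX hv hXv, Real.cos_sq_add_sin_sq]
    · have hdiff : X - arc θ = (1 - Real.cos θ) • X + (-Real.sin θ) • v := by module
      have hsq : ‖X - arc θ‖ ^ 2 ≤ r ^ 2 := by
        rw [hdiff, norm_smul_add_smul_sq hX hv hXv]
        nlinarith [Real.cos_sq_add_sin_sq θ, Real.one_sub_sq_div_two_le_cos (x := θ)]
      rw [mem_closedBall, dist_comm, dist_eq_norm]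
      exact (pow_le_pow_iff_left₀ (norm_nonneg _) hr0.le two_ne_zero).1 hsq
  have hproj : LipschitzWith 1 fun w : E => ⟪v, w⟫ :=
    LipschitzWith.of_dist_le_mul fun a b => by
      simpa [Real.dist_eq, dist_eq_norm, ← inner_sub_right, hv] using
        abs_real_inner_le_norm v (a - b)
  have himage : Icc 0 (Real.sin r) ⊆ (fun w : E => ⟪v, w⟫) '' (arc '' Icc 0 r) := by
    rw [image_image]
    have hsin : ∀ θ, ⟪v, arc θ⟫ = Real.sin θ := fun θ => by
      simp [arc, inner_add_right, real_inner_smul_right, real_inner_comm X v, hXv, hv]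
    simp only [hsin]
    simpa using intermediate_value_Icc hr0.le Real.continuous_sin.continuousOn
  have hsin_ge : r / 2 ≤ Real.sin r := by
    nlinarith [Real.sin_gt_sub_cube hr0, pow_le_pow_left₀ hr0.le hr1 2]
  calc ENNReal.ofReal (r / 2) ≤ ENNReal.ofReal (Real.sin r - 0) :=
        ENNReal.ofReal_le_ofReal (by linarith)
    _ = μH[1] (Icc 0 (Real.sin r)) := by rw [hausdorffMeasure_real, Real.volume_Icc]
    _ ≤ μH[1] ((fun w : E => ⟪v, w⟫) '' (arc '' Icc 0 r)) := measure_mono himage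
    _ ≤ μH[1] (arc '' Icc 0 r) := by
        simpa using hproj.hausdorffMeasure_image_le zero_le_one (arc '' Icc 0 r)
    _ ≤ μH[1] (sphere (0 : E) 1 ∩ closedBall X r) := measure_mono harc

variable {F : Type*} [NormedAddCommGroup F] [InnerProductSpace ℝ F] [MeasurableSpace F]
  [BorelSpace F]

theorem lintegral_norm_sub_smul_rpow_le_of_measure_closedBall_le (μ : Measure E) (ν : Measure F)
    {S : Set E} {T : Set F} (hS : S ⊆ sphere 0 1) (hT : T ⊆ sphere 0 1) {p : E} {X : F}
    (hp : ‖p‖ = 1) (hX : ‖X‖ = 1) {τ e : ℝ} (hτ : 1 < τ) (he : e < 0) {c : ℝ≥0∞} (hc : c ≠ ∞)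
    (hball : ∀ r, μ (S ∩ closedBall p r) ≤ c * ν (T ∩ closedBall X r)) :
    ∫⁻ y in S, ENNReal.ofReal (‖p - τ • y‖ ^ e) ∂μ ≤
      c * ∫⁻ Y in T, ENNReal.ofReal (‖X - τ • Y‖ ^ e) ∂ν := by
  refine lintegral_ofReal_le_mul_of_meas_le (ae_of_all _ fun _ => by positivity)
    (by fun_prop) (ae_of_all _ fun _ => by positivity) (by fun_prop) hc fun t ht => ?_
  rw [Measure.restrict_apply (measurableSet_le measurable_const (by fun_prop)),
    Measure.restrict_apply (measurableSet_le measurable_const (by fun_prop))]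
  set w := (t ^ (2 / e) - (τ - 1) ^ 2) / τ
  rcases lt_or_ge w 0 with hw | hw
  · have hempty : {y | t ≤ ‖p - τ • y‖ ^ e} ∩ S = ∅ :=
      eq_empty_of_forall_notMem fun y ⟨hy, hyS⟩ => hw.not_ge ((sq_nonneg _).trans
        ((le_norm_sub_smul_rpow_iff hp (mem_sphere_zero_iff_norm.1 (hS hyS)) hτ he ht).1 hy))
    simp [hempty]
  calc μ ({y | t ≤ ‖p - τ • y‖ ^ e} ∩ S) ≤ μ (S ∩ closedBall p √w) :=
        measure_mono fun y ⟨hy, hyS⟩ => ⟨hyS,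
          (le_norm_sub_smul_rpow_iff_mem_closedBall hp (hS hyS) hτ he ht hw).1 hy⟩
    _ ≤ c * ν (T ∩ closedBall X √w) := hball _
    _ ≤ c * ν ({Y | t ≤ ‖X - τ • Y‖ ^ e} ∩ T) := by
        refine mul_le_mul_right (measure_mono fun Y hY => ?_) c
        exact ⟨(le_norm_sub_smul_rpow_iff_mem_closedBall hX (hT hY.1) hτ he ht hw).2 hY.2, hY.1⟩

end UnitSphere

open scoped EuclideanSpace in
theorem exists_norm_eq_one_inner_eq_zero (X : E2) (hX : ‖X‖ = 1) :
    ∃ v : E2, ‖v‖ = 1 ∧ ⟪X, v⟫ = 0 := by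
  let o : Orientation ℝ E2 (Fin 2) := (EuclideanSpace.basisFun (Fin 2) ℝ).toBasis.orientation
  exact ⟨o.rightAngleRotation X, by simpa using hX, by simp⟩

/-- there is a universal `C` such that for every `s ∈ (1/2,1)`, every compact
`γ ⊆ S²` satisfying the upper density bound `H¹(γ ∩ B_ρ(p)) ≤ Λρ` for `p ∈ γ`, `ρ ∈ (0,1/2)`,
every `p ∈ γ`, `X̂ ∈ S¹` and `τ > 1`,
`∫_γ |p−τŷ|^{−3−s} dH¹(ŷ) ≤ C Λ ∫_{S¹} |X̂−τŶ|^{−3−s} dH¹(Ŷ)`. -/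
theorem kernel_single_integral_comparison :
    ∃ C : ℝ, 0 < C ∧ ∀ s ∈ Set.Ioo (1/2 : ℝ) 1,
      ∀ γ : Set E3, IsCompact γ → γ ⊆ Metric.sphere (0:E3) 1 →
      ∀ Λ : ℝ, 0 < Λ →
      (∀ p ∈ γ, ∀ ρ ∈ Set.Ioo (0:ℝ) (1/2),
        μH[1] (γ ∩ Metric.ball p ρ) ≤ ENNReal.ofReal (Λ * ρ)) →
      ∀ p ∈ γ, ∀ X ∈ Metric.sphere (0:E2) 1, ∀ τ : ℝ, 1 < τ →
        (∫⁻ y in γ, ENNReal.ofReal (‖p - τ • y‖ ^ (-(3:ℝ) - s)) ∂μH[1])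
          ≤ ENNReal.ofReal (C * Λ) *
            ∫⁻ Y in Metric.sphere (0:E2) 1,
              ENNReal.ofReal (‖X - τ • Y‖ ^ (-(3:ℝ) - s)) ∂μH[1] := by
  obtain ⟨t, hcover⟩ := (isCompact_sphere (0 : E3) 1).elim_finite_subcover
    (fun x => ball x (1 / 8)) (fun _ => isOpen_ball)
    (fun z _ => mem_iUnion.2 ⟨z, mem_ball_self (by norm_num)⟩)
  refine ⟨4 + 2 * t.card, by positivity, ?_⟩
  rintro s ⟨hs, -⟩ γ - hγ Λ hΛ hden p hp X hX τ hτ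
  have hmass : μH[1] γ ≤ ENNReal.ofReal (t.card / 4 * Λ) := by
    refine (measure_le_card_mul_of_subset_biUnion_ball _ (hγ.trans hcover)
      fun q hq => hden q hq _ ⟨by norm_num, by norm_num⟩).trans_eq ?_
    rw [← ENNReal.ofReal_natCast, ← ENNReal.ofReal_mul (by positivity)]
    ring_nf
  have hX1 : ‖X‖ = 1 := mem_sphere_zero_iff_norm.1 hX
  obtain ⟨v, hv, hXv⟩ := exists_norm_eq_one_inner_eq_zero X hX1
  have := Measure.nullSingletonClass_hausdorff E3 one_pos
  refine lintegral_norm_sub_smul_rpow_le_of_measure_closedBall_le _ _ hγ subset_rfl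
    (mem_sphere_zero_iff_norm.1 (hγ hp)) hX1 hτ (by linarith) ENNReal.ofReal_ne_top fun r => ?_
  exact measure_inter_closedBall_le_of_upper_density hΛ.le (by linarith) (by linarith)
    (hden p hp) hmass
    (fun r hr => ofReal_half_le_hausdorffMeasure_sphere_inter_closedBall hX1 hv hXv hr.1 hr.2) r
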